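/- arXiv:1710.05140 — 3 statements merged into one kernel-verified Lean document; each statement's English description precedes it below -/
import Mathlib

section
/- Let A be a finite symmetric generating set of ℤ^k not containing 0, with x ∈ A a vertex of the convex hull of A. Then for every t ≥ 0, ρ(tx) = t, and moreover the only way to write tx as a sum of t elements of A is with all summands equal to x. -/
/-!
Let `f` be the additive map `v ↦ l v`. Every generator `a ≠ x` has `f a < f x`, so a word of
length `n` in the generators has `f`-value at most `n • f x`, with equality only if every letter
is `x`. Since `f (t • x) = t • f x` and `f x > 0` (because `-x ≠ x` is also a generator,
`-f x < f x`), a word for `t • x` has length at least `t`, and a word of length exactly `t`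
is `x, …, x`.
-/

noncomputable def wdist {k : ℕ} (A : Set (Fin k → ℤ)) (v : Fin k → ℤ) : ℕ :=
  sInf {n | ∃ l : List (Fin k → ℤ), l.length = n ∧ (∀ a ∈ l, a ∈ A) ∧ l.sum = v}

section StrictMaximizer

variable {M N : Type*} [AddMonoid M] [AddCommGroup N] [LinearOrder N] [IsOrderedAddMonoid N]
  (f : M →+ N) {S : Set M} {x : M}

theorem AddMonoidHom.map_list_sum_le_length_nsmul (hS : ∀ y ∈ S, f y ≤ f x)
    {L : List M} (hL : ∀ a ∈ L, a ∈ S) : f L.sum ≤ L.length • f x := by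
  rw [map_list_sum, ← L.length_map f]
  exact List.sum_le_card_nsmul _ _ (by simpa using fun a ha => hS a (hL a ha))

theorem AddMonoidHom.map_list_sum_lt_length_nsmul (hS : ∀ y ∈ S, y ≠ x → f y < f x)
    {L : List M} (hL : ∀ a ∈ L, a ∈ S) (hne : ∃ a ∈ L, a ≠ x) :
    f L.sum < L.length • f x := by
  have hle : ∀ a ∈ L, f a ≤ f x := fun a ha =>
    (eq_or_ne a x).elim (fun h => h ▸ le_rfl) fun h => (hS a (hL a ha) h).le
  obtain ⟨b, hb, hbx⟩ := hne
  have := List.sum_lt_sum f (fun _ => f x) hle ⟨b, hb, hS b (hL b hb) hbx⟩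
  simpa [map_list_sum] using this

theorem List.eq_replicate_of_sum_eq_length_nsmul (hS : ∀ y ∈ S, y ≠ x → f y < f x)
    {L : List M} (hL : ∀ a ∈ L, a ∈ S) (hsum : L.sum = L.length • x) :
    L = List.replicate L.length x := by
  refine List.eq_replicate_iff.mpr ⟨rfl, fun a ha => ?_⟩
  by_contra hax
  have := f.map_list_sum_lt_length_nsmul hS hL ⟨a, ha, hax⟩
  rw [hsum, map_nsmul] at this
  exact this.false

theorem le_length_of_sum_eq_nsmul (hS : ∀ y ∈ S, y ≠ x → f y < f x) (hfx : 0 < f x)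
    {L : List M} (hL : ∀ a ∈ L, a ∈ S) {t : ℕ} (hsum : L.sum = t • x) : t ≤ L.length := by
  have hle := f.map_list_sum_le_length_nsmul
    (fun y hy => (eq_or_ne y x).elim (fun h => h ▸ le_rfl) fun h => (hS y hy h).le) hL
  rwa [hsum, map_nsmul, nsmul_le_nsmul_iff_left hfx] at hle

end StrictMaximizer

theorem wdist_nsmul_eq {k : ℕ} {A : Set (Fin k → ℤ)} {x : Fin k → ℤ} (hx : x ∈ A) {t : ℕ}
    (hmin : ∀ L : List (Fin k → ℤ), (∀ a ∈ L, a ∈ A) → L.sum = t • x → t ≤ L.length) :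
    wdist A (t • x) = t := by
  have hmem : t ∈ {n | ∃ L : List (Fin k → ℤ), L.length = n ∧ (∀ a ∈ L, a ∈ A) ∧
      L.sum = t • x} :=
    ⟨List.replicate t x, List.length_replicate, fun a ha => List.eq_of_mem_replicate ha ▸ hx,
      by simp⟩
  refine le_antisymm (Nat.sInf_le hmem) (le_csInf ⟨t, hmem⟩ ?_)
  rintro n ⟨L, rfl, hL, hsum⟩
  exact hmin L hL hsum

theorem stmt8_general {k : ℕ} (A : Set (Fin k → ℤ))
    (hsym : ∀ x ∈ A, -x ∈ A) (h0A : (0 : Fin k → ℤ) ∉ A)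
    (x : Fin k → ℤ) (hx : x ∈ A)
    -- x is a vertex of Conv A: a linear functional separates it strictly
    (l : (Fin k → ℝ) →ₗ[ℝ] ℝ)
    (hl : ∀ y ∈ A, y ≠ x → l (fun i => (y i : ℝ)) < l (fun i => (x i : ℝ))) :
    ∀ t : ℕ, wdist A (t • x) = t ∧
      ∀ L : List (Fin k → ℤ), (∀ a ∈ L, a ∈ A) → L.length = t → L.sum = t • x →
        L = List.replicate t x := by
  set f : (Fin k → ℤ) →+ ℝ := l.toAddMonoidHom.comp ((Int.castAddHom ℝ).compLeft (Fin k))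
  have hfx : 0 < f x := by
    have hneg : f (-x) < f x :=
      hl (-x) (hsym x hx) (neg_ne_self.mpr fun h => h0A (h ▸ hx))
    rw [map_neg] at hneg
    linarith
  intro t
  refine ⟨wdist_nsmul_eq hx fun L hL hsum => le_length_of_sum_eq_nsmul f hl hfx hL hsum, ?_⟩
  rintro L hL rfl hsum
  exact L.eq_replicate_of_sum_eq_length_nsmul f hl hL hsum

theorem stmt8 {k : ℕ} (A : Set (Fin k → ℤ)) (hfin : A.Finite)
    (hsym : ∀ x ∈ A, -x ∈ A) (h0A : (0 : Fin k → ℤ) ∉ A)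
    (hgen : AddSubgroup.closure A = ⊤) (x : Fin k → ℤ) (hx : x ∈ A)
    -- x is a vertex of Conv A: a linear functional separates it strictly
    (l : (Fin k → ℝ) →ₗ[ℝ] ℝ)
    (hl : ∀ y ∈ A, y ≠ x → l (fun i => (y i : ℝ)) < l (fun i => (x i : ℝ))) :
    ∀ t : ℕ, wdist A (t • x) = t ∧
      ∀ L : List (Fin k → ℤ), (∀ a ∈ L, a ∈ A) → L.length = t → L.sum = t • x →
        L = List.replicate t x :=
  stmt8_general A hsym h0A x hx l hl
end

section
/- Let A be a finite symmetric generating set of ℤ^k not containing 0 and suppose x ∈ A is not a vertex of Conv A. Then there exist a positive integer K and a representation Kx = Σ A_i y_i where all y_i ∈ A \ {x}, all A_i are non-negative integers, and 0 < Σ A_i ≤ K. Consequently either ρ(Kx) < K or there exist two distinct shortest representations of Kx. -/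
def IsHullVertex {k : ℕ} (A : Set (Fin k → ℤ)) (x : Fin k → ℤ) : Prop :=
  ∃ l : (Fin k → ℝ) →ₗ[ℝ] ℝ, ∀ y ∈ A, y ≠ x →
    l (fun i => (y i : ℝ)) < l (fun i => (x i : ℝ))

open Matrix

theorem Matrix.exists_mulVec_eq_of_exists_real {m ι : Type*} [Fintype m] [Fintype ι]
    (M : Matrix m ι ℚ) (v : m → ℚ) (h : ∃ w : ι → ℝ, M.map (↑) *ᵥ w = (↑) ∘ v) :
    ∃ q : ι → ℚ, M *ᵥ q = v := by
  classical
  obtain ⟨w, hw⟩ := h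
  by_contra hv
  obtain ⟨φ, hφv, hφM⟩ := Submodule.exists_dual_map_eq_bot_of_notMem
    (p := LinearMap.range M.mulVecLin) (x := v) (by simpa using hv) inferInstance
  set a := (dotProductEquiv ℚ m).symm φ
  have hφ : ∀ u, φ u = a ⬝ᵥ u := fun u => by
    rw [← LinearEquiv.apply_symm_apply (dotProductEquiv ℚ m) φ]; rfl
  have haM : a ᵥ* M = 0 := by
    funext i
    have : φ (M *ᵥ Pi.single i 1) ∈ (⊥ : Submodule ℚ ℚ) :=
      hφM ▸ Submodule.mem_map_of_mem ⟨Pi.single i 1, rfl⟩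
    rwa [Submodule.mem_bot, hφ, dotProduct_mulVec, dotProduct_single, mul_one] at this
  have haM' : ((↑) ∘ a : m → ℝ) ᵥ* M.map (↑) = 0 := by
    funext i
    simpa [haM] using ((Rat.castHom ℝ).map_vecMul M a i).symm
  -- `a` kills the rational column space of `M` but not `v`; cast to `ℝ` it still kills the real
  -- column space, which contains `v`
  apply hφv
  rw [hφ]
  suffices ((a ⬝ᵥ v : ℚ) : ℝ) = 0 by exact_mod_cast this
  change Rat.castHom ℝ _ = 0
  rw [RingHom.map_dotProduct, Rat.coe_castHom, ← hw, dotProduct_mulVec, haM', zero_dotProduct]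

theorem AffineIndependent.exists_rat_weights {ι n : Type*} [Fintype ι] [Fintype n]
    {z : ι → n → ℚ} {x : n → ℚ} (hz : AffineIndependent ℝ fun i j => (z i j : ℝ))
    {w : ι → ℝ} (hw1 : ∑ i, w i = 1)
    (hwx : ∑ i, w i • (fun j => (z i j : ℝ)) = fun j => (x j : ℝ)) :
    ∃ q : ι → ℚ, ∑ i, q i = 1 ∧ ∑ i, q i • z i = x ∧ ∀ i, (q i : ℝ) = w i := by
  -- the affine equations, with the constraint `∑ q = 1` as the extra row `none`
  let M : Matrix (Option n) ι ℚ := Matrix.of fun o i => o.elim 1 (z i)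
  let v : Option n → ℚ := fun o => o.elim 1 x
  obtain ⟨q, hq⟩ := M.exists_mulVec_eq_of_exists_real v ⟨w, funext fun o => by
    cases o with
    | none => simpa [M, v, mulVec, dotProduct] using hw1
    | some j => simpa [M, v, mulVec, dotProduct, Finset.sum_apply, mul_comm] using congrFun hwx j⟩
  have hq1 : ∑ i, q i = 1 := by simpa [M, v, mulVec, dotProduct] using congrFun hq none
  have hqx : ∑ i, q i • z i = x := funext fun j => by
    simpa [M, v, mulVec, dotProduct, Finset.sum_apply, mul_comm] using congrFun hq (some j)
  have hq1' : ∑ i, (q i : ℝ) = 1 := by exact_mod_cast hq1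
  refine ⟨q, hq1, hqx, congrFun ((affineIndependent_iff_eq_of_fintype_affineCombination_eq ℝ _).1
    hz (fun i => (q i : ℝ)) w hq1' hw1 ?_)⟩
  rw [Finset.affineCombination_eq_linear_combination _ _ _ hq1',
    Finset.affineCombination_eq_linear_combination _ _ _ hw1, hwx]
  funext j
  simpa [Finset.sum_apply] using congrArg (fun y : n → ℚ => (y j : ℝ)) hqx

theorem exists_pos_nat_mul_eq_natCast {ι : Type*} [Fintype ι] (q : ι → ℚ) (hq : ∀ i, 0 ≤ q i) :
    ∃ N : ℕ, 0 < N ∧ ∃ m : ι → ℕ, ∀ i, (m i : ℚ) = N * q i := by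
  refine ⟨∏ i, (q i).den, Finset.prod_pos fun i _ => (q i).den_pos,
    fun i => (∏ j, (q j).den) / (q i).den * (q i).num.toNat, fun i => ?_⟩
  have hdvd : (q i).den ∣ ∏ j, (q j).den := Finset.dvd_prod_of_mem _ (Finset.mem_univ i)
  have hnum : ((q i).num.toNat : ℚ) = (q i).den * q i := by
    rw [Rat.den_mul_eq_num, ← Int.toNat_of_nonneg (Rat.num_nonneg.2 (hq i))]; rfl
  rw [Nat.cast_mul, hnum, ← mul_assoc, ← Nat.cast_mul, Nat.div_mul_cancel hdvd]

theorem exists_finsupp_of_rat_convex_combination {ι n : Type*} [Fintype ι] {S : Set (n → ℤ)}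
    {x : n → ℤ} {y : ι → n → ℤ} (hyS : ∀ i, y i ∈ S) {q : ι → ℚ} (hq0 : ∀ i, 0 ≤ q i)
    (hq1 : ∑ i, q i = 1) (hqx : ∑ i, q i • (fun j => (y i j : ℚ)) = fun j => (x j : ℚ)) :
    ∃ K : ℕ, 0 < K ∧ ∃ c : (n → ℤ) →₀ ℕ, ↑c.support ⊆ S ∧
      ∑ v ∈ c.support, (c v : ℤ) • v = (K : ℤ) • x ∧ ∑ v ∈ c.support, c v = K := by
  classical
  obtain ⟨K, hK, m, hm⟩ := exists_pos_nat_mul_eq_natCast q hq0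
  have hmK : ∑ i, m i = K := by
    exact_mod_cast show ∑ i, (m i : ℚ) = K by simp [hm, ← Finset.mul_sum, hq1]
  have hmx : ∑ i, (m i : ℤ) • y i = (K : ℤ) • x := funext fun j => by
    suffices ∑ i, (m i : ℚ) * y i j = K * x j by simpa using (by exact_mod_cast this : _ = _)
    simpa [hm, mul_assoc, ← Finset.mul_sum, Finset.sum_apply] using
      congrArg (fun v => (K : ℚ) * v j) hqx
  set c : (n → ℤ) →₀ ℕ := ∑ i, Finsupp.single (y i) (m i)
  refine ⟨K, hK, c, fun v hv => ?_, ?_, ?_⟩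
  · obtain ⟨i, -, hi⟩ := Finset.mem_biUnion.1 (Finsupp.support_finsetSum hv)
    rw [Finset.mem_singleton.1 (Finsupp.support_single_subset hi)]
    exact hyS i
  · change c.sum (fun v n => (n : ℤ) • v) = _
    rw [← Finsupp.sum_finsetSum_index (by simp) (by simp [add_smul]), ← hmx]
    simp
  · change c.sum (fun _ n => n) = _
    rw [← Finsupp.sum_finsetSum_index (by simp) (by simp), ← hmK]
    simp

theorem mem_convexHull_of_not_isHullVertex {k : ℕ} {A : Set (Fin k → ℤ)} (hfin : A.Finite)
    {x : Fin k → ℤ} (hnv : ¬ IsHullVertex A x) :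
    (fun i => (x i : ℝ)) ∈ convexHull ℝ ((fun (y : Fin k → ℤ) i => (y i : ℝ)) '' (A \ {x})) := by
  by_contra hout
  obtain ⟨f, u, hf, hfx⟩ := geometric_hahn_banach_closed_point (convex_convexHull ℝ _)
    ((hfin.sdiff.image _).isClosed_convexHull ℝ) hout
  exact hnv ⟨f.toLinearMap, fun y hy hyx =>
    (hf _ (subset_convexHull ℝ _ ⟨y, ⟨hy, hyx⟩, rfl⟩)).trans hfx⟩

theorem exists_rat_convex_combination_of_not_isHullVertex {k : ℕ} {A : Set (Fin k → ℤ)}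
    (hfin : A.Finite) {x : Fin k → ℤ} (hnv : ¬ IsHullVertex A x) :
    ∃ (ι : Type) (_ : Fintype ι) (y : ι → Fin k → ℤ) (q : ι → ℚ), (∀ i, y i ∈ A \ {x}) ∧
      (∀ i, 0 ≤ q i) ∧ ∑ i, q i = 1 ∧ ∑ i, q i • (fun j => (y i j : ℚ)) = fun j => (x j : ℚ) := by
  obtain ⟨ι, _, z, w, hzA, hz, hw0, hw1, hwx⟩ :=
    eq_pos_convex_span_of_mem_convexHull (mem_convexHull_of_not_isHullVertex hfin hnv)
  choose y hyA hyz using fun i => hzA ⟨i, rfl⟩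
  obtain rfl : z = fun i j => (y i j : ℝ) := funext fun i => (hyz i).symm
  obtain ⟨q, hq1, hqx, hqw⟩ := AffineIndependent.exists_rat_weights
    (z := fun i j => (y i j : ℚ)) (x := fun j => (x j : ℚ)) (by simpa using hz) hw1
    (by simpa using hwx)
  exact ⟨ι, inferInstance, y, q, hyA, fun i => by exact_mod_cast (hqw i).symm ▸ (hw0 i).le,
    hq1, hqx⟩

theorem wdist_le_length {k : ℕ} {A : Set (Fin k → ℤ)} {l : List (Fin k → ℤ)}
    (hlA : ∀ a ∈ l, a ∈ A) : wdist A l.sum ≤ l.length :=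
  Nat.sInf_le ⟨l, rfl, hlA, rfl⟩

theorem wdist_lt_or_exists_two_geodesics {k : ℕ} {A : Set (Fin k → ℤ)} {v : Fin k → ℤ}
    {l₁ l₂ : List (Fin k → ℤ)} (hne : l₁ ≠ l₂) (h₁A : ∀ a ∈ l₁, a ∈ A) (h₂A : ∀ a ∈ l₂, a ∈ A)
    (h₁ : l₁.sum = v) (h₂ : l₂.sum = v) (hlen : l₂.length ≤ l₁.length) :
    wdist A v < l₁.length ∨
      ∃ l₁ l₂ : List (Fin k → ℤ), l₁ ≠ l₂ ∧
        l₁.length = wdist A v ∧ l₂.length = wdist A v ∧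
        (∀ a ∈ l₁, a ∈ A) ∧ (∀ a ∈ l₂, a ∈ A) ∧ l₁.sum = v ∧ l₂.sum = v := by
  have h₂le : wdist A v ≤ l₂.length := h₂ ▸ wdist_le_length h₂A
  refine (lt_or_ge _ _).imp_right fun hge => ⟨l₁, l₂, hne, ?_, ?_, h₁A, h₂A, h₁, h₂⟩ <;> omega

theorem stmt9_general {k : ℕ} (A : Set (Fin k → ℤ)) (hfin : A.Finite)
    (x : Fin k → ℤ) (hx : x ∈ A)
    (hnv : ¬ IsHullVertex A x) :
    ∃ K : ℕ, 0 < K ∧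
      -- a representation K·x = Σ A_i y_i with y_i ∈ A \ {x}, A_i ≥ 0, 0 < Σ A_i ≤ K
      (∃ c : (Fin k → ℤ) →₀ ℕ, (↑c.support ⊆ A \ {x}) ∧
        (∑ y ∈ c.support, (c y : ℤ) • y) = (K : ℤ) • x ∧
        0 < ∑ y ∈ c.support, c y ∧ (∑ y ∈ c.support, c y) ≤ K) ∧
      -- consequently either ρ(Kx) < K or there are two distinct shortest representations
      (wdist A (K • x) < K ∨
        ∃ l₁ l₂ : List (Fin k → ℤ), l₁ ≠ l₂ ∧
          l₁.length = wdist A (K • x) ∧ l₂.length = wdist A (K • x) ∧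
          (∀ a ∈ l₁, a ∈ A) ∧ (∀ a ∈ l₂, a ∈ A) ∧
          l₁.sum = K • x ∧ l₂.sum = K • x) := by
  obtain ⟨ι, _, y, q, hyA, hq0, hq1, hqx⟩ :=
    exists_rat_convex_combination_of_not_isHullVertex hfin hnv
  obtain ⟨K, hK, c, hcA, hcx, hcK⟩ := exists_finsupp_of_rat_convex_combination hyA hq0 hq1 hqx
  refine ⟨K, hK, ⟨c, hcA, hcx, hcK ▸ hK, hcK.le⟩, ?_⟩
  -- the word read off `c` avoids `x`, hence differs from `x, …, x`
  have hc : ∀ a ∈ c.toMultiset.toList, a ∈ A \ {x} := fun a ha =>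
    hcA (by simpa using ha)
  have hcx' : c.toMultiset.toList.sum = K • x := by
    rw [Multiset.sum_toList, Finsupp.sum_toMultiset, ← natCast_zsmul, ← hcx]
    simp [Finsupp.sum]
  have hcK' : c.toMultiset.toList.length = K := by
    simpa [Finsupp.sum] using hcK
  simpa using wdist_lt_or_exists_two_geodesics (A := A)
    (l₁ := List.replicate K x) (l₂ := c.toMultiset.toList)
    (fun h => (hc x (h ▸ List.mem_replicate.2 ⟨hK.ne', rfl⟩)).2 rfl)
    (fun a ha => List.eq_of_mem_replicate ha ▸ hx) (fun a ha => (hc a ha).1)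
    (List.sum_replicate _ _) hcx' (by simp [hcK'])

theorem stmt9 {k : ℕ} (A : Set (Fin k → ℤ)) (hfin : A.Finite)
    (hsym : ∀ x ∈ A, -x ∈ A) (h0A : (0 : Fin k → ℤ) ∉ A)
    (hgen : AddSubgroup.closure A = ⊤) (x : Fin k → ℤ) (hx : x ∈ A)
    (hnv : ¬ IsHullVertex A x) :
    ∃ K : ℕ, 0 < K ∧
      -- a representation K·x = Σ A_i y_i with y_i ∈ A \ {x}, A_i ≥ 0, 0 < Σ A_i ≤ K
      (∃ c : (Fin k → ℤ) →₀ ℕ, (↑c.support ⊆ A \ {x}) ∧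
        (∑ y ∈ c.support, (c y : ℤ) • y) = (K : ℤ) • x ∧
        0 < ∑ y ∈ c.support, c y ∧ (∑ y ∈ c.support, c y) ≤ K) ∧
      -- consequently either ρ(Kx) < K or there are two distinct shortest representations
      (wdist A (K • x) < K ∨
        ∃ l₁ l₂ : List (Fin k → ℤ), l₁ ≠ l₂ ∧
          l₁.length = wdist A (K • x) ∧ l₂.length = wdist A (K • x) ∧
          (∀ a ∈ l₁, a ∈ A) ∧ (∀ a ∈ l₂, a ∈ A) ∧
          l₁.sum = K • x ∧ l₂.sum = K • x) :=
  stmt9_general A hfin x hx hnv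
end

section
/- Let A be a finite symmetric generating set of ℤ^k not containing 0. There exists an integer Δ such that for every v ∈ ℤ^k there is a shortest representation of v as a sum of ρ(v) elements of A containing at most Δ summands that are not primary elements of A. -/
/-!
Every `a ∈ A` lies in the real convex hull of the primary elements: by Krein–Milman the finite hull
is the hull of its extreme points, and a functional separating an extreme point from the rest of
`A` makes it primary. Carathéodory writes `a` with affinely independent primary points, whose
weights are then unique and hence rational; clearing denominators gives `K_a • a` as a sum of
`K_a` primary elements. In a shortest representation of `v`, `K_a` copies of a secondary `a` can
be traded for these primary elements without changing the length or the sum, so some shortest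
representation uses each secondary `a` fewer than `K_a` times.
-/

open Matrix

theorem Rat.exists_natCast_eq_mul_of_nonneg {ι : Type*} [Fintype ι] {q : ι → ℚ}
    (hq : ∀ i, 0 ≤ q i) :
    ∃ d : ℕ, 0 < d ∧ ∃ n : ι → ℕ, ∀ i, (n i : ℚ) = q i * d := by
  refine ⟨∏ i, (q i).den, Finset.prod_pos fun i _ => (q i).pos,
    fun i => (q i).num.toNat * ((∏ j, (q j).den) / (q i).den), fun i => ?_⟩
  obtain ⟨e, he⟩ := Finset.dvd_prod_of_mem (fun j => (q j).den) (Finset.mem_univ i)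
  dsimp only
  rw [he, Nat.mul_div_cancel_left _ (q i).pos, Nat.cast_mul, Nat.cast_mul, ← mul_assoc,
    Rat.mul_den_eq_num, ← Int.cast_natCast, Int.toNat_of_nonneg (Rat.num_nonneg.mpr (hq i))]

theorem Matrix.exists_comp_eq_of_mulVec_map_eq {K L m n : Type*} [Field K] [Field L] [Fintype m]
    [Fintype n] (f : K →+* L) (M : Matrix m n K)
    (hM : Function.Injective (M.map f).mulVec) {w : n → L} {b : m → K}
    (hw : M.map f *ᵥ w = f ∘ b) : ∃ q : n → K, f ∘ q = w := by
  classical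
  have hker : LinearMap.ker M.mulVecLin = ⊥ := by
    refine LinearMap.ker_eq_bot'.mpr fun v hv => funext fun j => f.injective ?_
    have hmap : M.map f *ᵥ (f ∘ v) = M.map f *ᵥ 0 := by
      ext i
      rw [← RingHom.map_mulVec, mulVec_zero, ← M.mulVecLin_apply, hv]
      simp
    simpa using congrFun (hM hmap) j
  obtain ⟨ψ, hψ⟩ := M.mulVecLin.exists_leftInverse_of_injective hker
  -- a left inverse of `M` over `K` stays a left inverse of `M.map f`, and it maps `b` to `w`
  have hinv : (LinearMap.toMatrix' ψ).map f * M.map f = 1 := by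
    rw [← Matrix.map_mul, ← LinearMap.toMatrix'_toLin' M, ← LinearMap.toMatrix'_comp,
      toLin'_apply', hψ, LinearMap.toMatrix'_id, Matrix.map_one _ f.map_zero f.map_one]
  refine ⟨LinearMap.toMatrix' ψ *ᵥ b, funext fun j => ?_⟩
  rw [Function.comp_apply, RingHom.map_mulVec, ← hw, mulVec_mulVec, hinv,
    one_mulVec]

theorem AffineIndependent.exists_comp_eq_of_sum_smul_eq {K L ι m : Type*} [Field K] [Field L]
    [Fintype ι] [Fintype m] (f : K →+* L) {p : ι → m → K}
    (hp : AffineIndependent L fun i => f ∘ p i) {x : m → K} {w : ι → L} (hw₁ : ∑ i, w i = 1)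
    (hwx : ∑ i, w i • (f ∘ p i) = f ∘ x) : ∃ q : ι → K, f ∘ q = w := by
  let M : Matrix (Option m) ι K := of fun r i => r.elim 1 (p i)
  have hM (v : ι → L) (r : Option m) :
      (M.map f *ᵥ v) r = r.elim (∑ i, v i) fun j => (∑ i, v i • (f ∘ p i)) j := by
    cases r <;> simp [M, mulVec, dotProduct, mul_comm]
  refine M.exists_comp_eq_of_mulVec_map_eq f ?_ (b := fun r => r.elim 1 x) ?_
  · intro u v huv
    have hker (r : Option m) : (M.map f *ᵥ (u - v)) r = 0 := by
      rw [mulVec_sub, huv, sub_self, Pi.zero_apply]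
    have hcoef := affineIndependent_iff.mp hp Finset.univ (u - v)
      ((hM _ none).symm.trans (hker none))
      (funext fun j => (hM _ (some j)).symm.trans (hker (some j)))
    exact funext fun i => sub_eq_zero.mp (hcoef i (Finset.mem_univ i))
  · ext (_ | j)
    · rw [hM]; exact hw₁.trans f.map_one.symm
    · rw [hM]; exact congrFun hwx j

theorem exists_nsmul_eq_sum_of_mem_convexHull {ι : Type*} [Fintype ι] {T : Set (ι → ℤ)}
    {a : ι → ℤ} (ha : (Int.cast ∘ a : ι → ℝ) ∈ convexHull ℝ ((Int.cast ∘ ·) '' T)) :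
    ∃ K > 0, ∃ P : Multiset (ι → ℤ), (∀ b ∈ P, b ∈ T) ∧ Multiset.card P = K ∧ P.sum = K • a := by
  obtain ⟨J, _, z, w, hzT, hz, hw₀, hw₁, hwa⟩ := eq_pos_convex_span_of_mem_convexHull ha
  choose b hbT hbz using fun j => hzT ⟨j, rfl⟩
  have hcast (v : ι → ℤ) : Rat.castHom ℝ ∘ (Int.cast ∘ v : ι → ℚ) = Int.cast ∘ v :=
    funext fun _ => Rat.cast_intCast _
  obtain ⟨q, rfl⟩ := AffineIndependent.exists_comp_eq_of_sum_smul_eq (Rat.castHom ℝ)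
    (p := fun j => Int.cast ∘ b j) (x := Int.cast ∘ a) (by simpa only [hcast, hbz] using hz) hw₁
    (by simpa only [hcast, hbz] using hwa)
  have hq₀ (j : J) : 0 < q j := by simpa using hw₀ j
  have hq₁ : ∑ j, q j = 1 := by exact_mod_cast (by simpa using hw₁ : ∑ j, (q j : ℝ) = 1)
  have hqa (i : ι) : ∑ j, q j * (b j i : ℚ) = a i := by
    have := congrFun hwa i
    simp only [← hbz, Finset.sum_apply, Pi.smul_apply, Function.comp_apply, smul_eq_mul,
      Rat.coe_castHom] at this
    exact_mod_cast this
  obtain ⟨d, hd, n, hn⟩ := Rat.exists_natCast_eq_mul_of_nonneg fun j => (hq₀ j).le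
  refine ⟨d, hd, ∑ j, Multiset.replicate (n j) (b j), ?_, ?_, ?_⟩
  · intro c hc
    obtain ⟨j, -, hcj⟩ := Multiset.mem_sum.mp hc
    exact Multiset.eq_of_mem_replicate hcj ▸ hbT j
  · simp only [Multiset.card_sum, Multiset.card_replicate]
    exact_mod_cast (by simp [hn, ← Finset.sum_mul, hq₁] : ∑ j, (n j : ℚ) = d)
  · ext i
    simp only [Multiset.sum_sum, Multiset.sum_replicate, Finset.sum_apply, Pi.smul_apply,
      nsmul_eq_mul]
    have hsum : ∑ j, (n j : ℚ) * b j i = d * a i := by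
      simp only [hn, ← hqa i, Finset.mul_sum]
      exact Finset.sum_congr rfl fun j _ => by ring
    exact_mod_cast hsum

theorem isHullVertex_of_mem_extremePoints {k : ℕ} {A : Set (Fin k → ℤ)} (hA : A.Finite)
    {x : Fin k → ℤ}
    (hx : (Int.cast ∘ x : Fin k → ℝ) ∈ (convexHull ℝ ((Int.cast ∘ ·) '' A)).extremePoints ℝ) :
    IsHullVertex A x := by
  set S : Set (Fin k → ℝ) := (Int.cast ∘ ·) '' A
  have hxS : Int.cast ∘ x ∉ convexHull ℝ (S \ {Int.cast ∘ x}) := fun h =>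
    ((convex_convexHull ℝ S).mem_extremePoints_iff_mem_sdiff_convexHull_sdiff.mp hx).2
      (convexHull_mono (Set.sdiff_subset_sdiff_left (subset_convexHull ℝ S)) h)
  obtain ⟨f, u, hfu, huf⟩ := geometric_hahn_banach_closed_point (convex_convexHull ℝ _)
    ((hA.image _).sdiff.isClosed_convexHull ℝ) hxS
  refine ⟨f.toLinearMap, fun y hy hyx => (hfu _ (subset_convexHull ℝ _ ⟨⟨y, hy, rfl⟩, ?_⟩)).trans
    huf⟩
  exact fun h => hyx (Int.cast_injective.comp_left h)

theorem mem_convexHull_image_isHullVertex {k : ℕ} {A : Set (Fin k → ℤ)} (hA : A.Finite)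
    {a : Fin k → ℤ} (ha : a ∈ A) :
    (Int.cast ∘ a : Fin k → ℝ) ∈ convexHull ℝ ((Int.cast ∘ ·) '' {b ∈ A | IsHullVertex A b}) := by
  set S : Set (Fin k → ℝ) := (Int.cast ∘ ·) '' A
  have hext : (convexHull ℝ S).extremePoints ℝ ⊆ (Int.cast ∘ ·) '' {b ∈ A | IsHullVertex A b} := by
    intro y hy
    obtain ⟨b, hb, rfl⟩ := extremePoints_convexHull_subset hy
    exact ⟨b, ⟨hb, isHullVertex_of_mem_extremePoints hA hy⟩, rfl⟩
  have hKM := closure_convexHull_extremePoints ((hA.image _).isCompact_convexHull ℝ)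
    (convex_convexHull ℝ S)
  have hclosed := ((hA.subset (Set.sep_subset A (IsHullVertex A))).image
    (Int.cast ∘ · : (Fin k → ℤ) → Fin k → ℝ)).isClosed_convexHull ℝ
  have haS : Int.cast ∘ a ∈ closure (convexHull ℝ ((convexHull ℝ S).extremePoints ℝ)) := by
    rw [hKM]
    exact subset_convexHull ℝ S ⟨a, ha, rfl⟩
  rw [← hclosed.closure_eq]
  exact closure_mono (convexHull_mono hext) haS

theorem Multiset.exists_count_lt_of_nsmul_eq_sum {α : Type*} [AddCommMonoid α] [DecidableEq α]
    {A : Set α} {p : α → Prop} {K : α → ℕ} {P : α → Multiset α} (hK : ∀ a ∈ A, 0 < K a)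
    (hP : ∀ a ∈ A, (∀ b ∈ P a, b ∈ A ∧ p b) ∧ card (P a) = K a ∧ (P a).sum = K a • a)
    (s : Multiset α) (hs : ∀ a ∈ s, a ∈ A) :
    ∃ t : Multiset α, card t = card s ∧ t.sum = s.sum ∧ (∀ a ∈ t, a ∈ A) ∧
      ∀ a ∈ t, ¬ p a → count a t < K a := by
  induction s using Multiset.induction_on with
  | empty => exact ⟨0, rfl, rfl, by simp, by simp⟩
  | cons a s ih =>
    have haA : a ∈ A := hs a (mem_cons_self a s)
    obtain ⟨t, hcard, hsum, htA, htK⟩ := ih fun b hb => hs b (mem_cons_of_mem hb)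
    have hcount_ne {b : α} (hb : b ∈ a ::ₘ t) (hba : b ≠ a) (hpb : ¬ p b) :
        count b (a ::ₘ t) < K b := by
      rw [count_cons_of_ne hba]
      exact htK b ((mem_cons.mp hb).resolve_left hba) hpb
    by_cases hkeep : p a ∨ count a t + 1 < K a
    · refine ⟨a ::ₘ t, by simp [hcard], by simp [hsum], ?_, fun b hb hpb => ?_⟩
      · simpa [haA] using htA
      · rcases eq_or_ne b a with rfl | hba
        · rw [count_cons_self]; exact hkeep.resolve_left hpb
        · exact hcount_ne hb hba hpb
    push Not at hkeep
    obtain ⟨hpa, hKa⟩ := hkeep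
    obtain ⟨hPA, hPcard, hPsum⟩ := hP a haA
    have hat : count a t < K a := by
      by_cases ha : a ∈ t
      · exact htK a ha hpa
      · rw [count_eq_zero.mpr ha]; exact hK a haA
    have hKeq : count a (a ::ₘ t) = K a := by rw [count_cons_self]; omega
    -- `a` now occurs exactly `K a` times: trade these copies for `P a`
    have hsplit : replicate (K a) a + (a ::ₘ t).filter (· ≠ a) = a ::ₘ t := by
      rw [← hKeq, ← filter_eq', filter_add_not]
    refine ⟨(a ::ₘ t).filter (· ≠ a) + P a, ?_, ?_, ?_, fun b hb hpb => ?_⟩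
    · have h := congrArg card hsplit
      rw [card_add, card_replicate, card_cons] at h
      rw [card_add, hPcard, card_cons, ← hcard]
      omega
    · have h := congrArg sum hsplit
      rw [sum_add, sum_replicate, sum_cons] at h
      rw [sum_add, hPsum, sum_cons, ← hsum, ← h, add_comm]
    · intro b hb
      rcases mem_add.mp hb with hb | hb
      · exact (mem_cons.mp (mem_of_mem_filter hb)).elim (· ▸ haA) (htA b)
      · exact (hPA b hb).1
    · have hbP : b ∉ P a := fun h => hpb (hPA b h).2
      have hb' : b ∈ (a ::ₘ t).filter (· ≠ a) := (mem_add.mp hb).resolve_right hbP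
      have hba : b ≠ a := (mem_filter.mp hb').2
      rw [count_add, count_eq_zero.mpr hbP, add_zero, count_filter_of_pos (p := (· ≠ a)) hba]
      exact hcount_ne (mem_of_mem_filter hb') hba hpb

theorem Multiset.card_le_sum_of_count_le {α : Type*} [DecidableEq α] {s : Multiset α}
    {F : Finset α} {f : α → ℕ} (hsF : ∀ a ∈ s, a ∈ F) (hf : ∀ a ∈ s, count a s ≤ f a) :
    card s ≤ ∑ a ∈ F, f a := by
  rw [← sum_count_eq_card hsF]
  refine Finset.sum_le_sum fun a _ => ?_
  by_cases ha : a ∈ s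
  · exact hf a ha
  · simp [count_eq_zero.mpr ha]

theorem exists_list_length_eq_wdist {k : ℕ} {A : Set (Fin k → ℤ)} (hsym : ∀ x ∈ A, -x ∈ A)
    (hgen : AddSubgroup.closure A = ⊤) (v : Fin k → ℤ) :
    ∃ l : List (Fin k → ℤ), l.length = wdist A v ∧ (∀ a ∈ l, a ∈ A) ∧ l.sum = v := by
  have hv : v ∈ AddSubmonoid.closure A := by
    rw [← Set.union_eq_self_of_subset_right (fun x hx => by simpa using hsym _ hx : -A ⊆ A),
      ← AddSubgroup.closure_toAddSubmonoid, hgen]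
    trivial
  obtain ⟨l, hlA, hlv⟩ := AddSubmonoid.exists_list_of_mem_closure hv
  exact Nat.sInf_mem
    (s := {n | ∃ l : List (Fin k → ℤ), l.length = n ∧ (∀ a ∈ l, a ∈ A) ∧ l.sum = v})
    ⟨l.length, l, rfl, hlA, hlv⟩

theorem stmt14_general {k : ℕ} (A : Set (Fin k → ℤ)) (hfin : A.Finite)
    (hsym : ∀ x ∈ A, -x ∈ A)
    (hgen : AddSubgroup.closure A = ⊤) :
    ∃ Δ : ℕ, ∀ v : Fin k → ℤ,
      -- a shortest representation of v with at most Δ non-primary (secondary) summands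
      ∃ lp ls : List (Fin k → ℤ),
        (∀ a ∈ lp, a ∈ A ∧ IsHullVertex A a) ∧
        (∀ a ∈ ls, a ∈ A) ∧
        ls.length ≤ Δ ∧
        (lp ++ ls).sum = v ∧
        (lp ++ ls).length = wdist A v := by
  classical
  choose! K hK P hP using fun a (ha : a ∈ A) =>
    exists_nsmul_eq_sum_of_mem_convexHull (mem_convexHull_image_isHullVertex hfin ha)
  refine ⟨∑ a ∈ hfin.toFinset.filter (¬ IsHullVertex A ·), K a, fun v => ?_⟩
  obtain ⟨l, hlen, hlA, hlv⟩ := exists_list_length_eq_wdist hsym hgen v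
  obtain ⟨t, htcard, htsum, htA, htK⟩ :=
    Multiset.exists_count_lt_of_nsmul_eq_sum hK hP (l : Multiset (Fin k → ℤ)) hlA
  have hsplit := Multiset.filter_add_not (IsHullVertex A) t
  refine ⟨(t.filter (IsHullVertex A)).toList, (t.filter (¬ IsHullVertex A ·)).toList,
    fun a ha => ?_, fun a ha => ?_, ?_, ?_, ?_⟩
  · obtain ⟨hat, hav⟩ := Multiset.mem_filter.mp (Multiset.mem_toList.mp ha)
    exact ⟨htA a hat, hav⟩
  · exact htA a (Multiset.mem_of_mem_filter (Multiset.mem_toList.mp ha))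
  · rw [Multiset.length_toList]
    refine Multiset.card_le_sum_of_count_le (fun a ha => ?_) fun a ha => ?_
    all_goals obtain ⟨hat, hav⟩ := Multiset.mem_filter.mp ha
    · exact Finset.mem_filter.mpr ⟨hfin.mem_toFinset.mpr (htA a hat), hav⟩
    · rw [Multiset.count_filter_of_pos (p := (¬ IsHullVertex A ·)) hav]
      exact (htK a hat hav).le
  · rw [List.sum_append, Multiset.sum_toList, Multiset.sum_toList, ← Multiset.sum_add, hsplit,
      htsum, Multiset.sum_coe, hlv]
  · rw [List.length_append, Multiset.length_toList, Multiset.length_toList, ← Multiset.card_add,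
      hsplit, htcard, Multiset.coe_card, hlen]

theorem stmt14 {k : ℕ} (A : Set (Fin k → ℤ)) (hfin : A.Finite)
    (hsym : ∀ x ∈ A, -x ∈ A) (h0A : (0 : Fin k → ℤ) ∉ A)
    (hgen : AddSubgroup.closure A = ⊤) :
    ∃ Δ : ℕ, ∀ v : Fin k → ℤ,
      -- a shortest representation of v with at most Δ non-primary (secondary) summands
      ∃ lp ls : List (Fin k → ℤ),
        (∀ a ∈ lp, a ∈ A ∧ IsHullVertex A a) ∧
        (∀ a ∈ ls, a ∈ A) ∧
        ls.length ≤ Δ ∧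
        (lp ++ ls).sum = v ∧
        (lp ++ ls).length = wdist A v :=
  stmt14_general A hfin hsym hgen
end
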